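/- Let q be a prime power, let a_1, ..., a_n be distinct elements of F_q, let v_1, ..., v_n be nonzero elements of F_q, and assume 1 ≤ k ≤ ⌊(n+1)/2⌋. Then the extended generalized Reed–Solomon code GRS_k(a, v, ∞) is Euclidean self-orthogonal if and only if there exists a polynomial λ(x) = −x^{n−2k+1} + λ_{n−2k} x^{n−2k} + ··· + λ_1 x + λ_0 ∈ F_q[x] (that is, a polynomial of degree n−2k+1 whose leading coefficient is −1) such that v_i^2 = λ(a_i) · L_a(a_i)^{−1} and λ(a_i) ≠ 0 for every 1 ≤ i ≤ n. -/

import Mathlib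

open Finset

variable {F : Type*} [Field F]

/-- The extended generalized Reed–Solomon code
`GRS_k(a, v, ∞) = { (v₁ f(a₁), …, vₙ f(aₙ), f_{k-1}) : f ∈ F[x], deg f ≤ k - 1 }`,
where `f_{k-1}` is the coefficient of `x^{k-1}` in `f`. -/
noncomputable def eGRSCode (n k : ℕ) (a v : Fin n → F) : Submodule F (Fin (n + 1) → F) :=
  (Polynomial.degreeLT F k).map
    (LinearMap.pi (Fin.lastCases (Polynomial.lcoeff F (k - 1))
      (fun i => v i • Polynomial.leval (a i))))

/-!
Write `L i = ∏_{j ≠ i} (a i - a j)`. For `deg h < n` the residue formula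
`h_{n-1} = ∑ h(a i) / L i` (`Lagrange.coeff_eq_sum`) turns `∑ v_i² q(a_i)` into the coefficient
`(λ q)_{n-1}` as soon as `v_i² = λ(a_i) / L i`. Self-orthogonality says that
`∑ v_i² (f g)(a_i) = -f_{k-1} g_{k-1}` whenever `deg f, deg g < k`; in particular the power sums
`∑ v_i² a_i^t` vanish for `t < 2k-2` and equal `-1` at `t = 2k-2`. If `λ` has degree `n+1-2k` and
leading coefficient `-1`, the residue formula gives exactly this. Conversely, let `λ` interpolate
`v_i² L i`: the vanishing power sums kill the coefficients of `λ` above `n+1-2k`, and the last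
power sum makes its coefficient at `n+1-2k` equal to `-1`.
-/

open Polynomial

theorem Polynomial.natDegree_le_pred_of_degree_lt {R : Type*} [Semiring R] {p : R[X]} {m : ℕ}
    (h : p.degree < m) : p.natDegree ≤ m - 1 :=
  natDegree_le_iff_coeff_eq_zero.mpr fun _ hN => (degree_lt_iff_coeff_zero p m).mp h _ (by omega)

namespace Lagrange

variable {ι : Type*} [DecidableEq ι] {s : Finset ι} {x : ι → F}

theorem sum_eval_mul_eval_div_eq_coeff_mul_coeff (hxs : Set.InjOn x s) {p q : F[X]} {m l : ℕ}
    (hp : p.natDegree ≤ m) (hq : q.natDegree ≤ l) (hs : m + l + 1 = #s) :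
    ∑ i ∈ s, p.eval (x i) * q.eval (x i) / ∏ j ∈ s.erase i, (x i - x j) =
      p.coeff m * q.coeff l := by
  have hpq : (p * q).degree < #s := by
    refine (degree_le_natDegree.trans ?_).trans_lt (WithBot.coe_lt_coe.mpr (show m + l < #s by omega))
    exact Nat.cast_le.mpr (natDegree_mul_le.trans (add_le_add hp hq))
  rw [← coeff_mul_add_eq_of_natDegree_le hp hq, show m + l = #s - 1 by omega,
    coeff_eq_sum hxs hpq]
  simp only [eval_mul]

theorem degree_lt_of_sum_eval_mul_pow_div_eq_zero (hxs : Set.InjOn x s) {p : F[X]} {d : ℕ}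
    (hp : p.degree < #s)
    (h : ∀ t < d, ∑ i ∈ s, p.eval (x i) * x i ^ t / ∏ j ∈ s.erase i, (x i - x j) = 0) :
    p.degree < ↑(#s - d) := by
  by_contra! hle
  have hp0 : p ≠ 0 := by rintro rfl; simp at hle
  have hlt : p.natDegree < #s := (natDegree_lt_iff_degree_lt hp0).mpr hp
  have hge : #s - d ≤ p.natDegree := by
    rwa [degree_eq_natDegree hp0, Nat.cast_le] at hle
  -- pair `p` with the monomial that brings its leading term to degree `#s - 1`
  have key := sum_eval_mul_eval_div_eq_coeff_mul_coeff hxs (p := p)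
    (q := X ^ (#s - 1 - p.natDegree)) le_rfl (natDegree_X_pow_le _) (by omega)
  simp only [eval_pow, eval_X, coeff_X_pow_self, mul_one] at key
  rw [h _ (by omega), coeff_natDegree, eq_comm, leadingCoeff_eq_zero] at key
  exact hp0 key

end Lagrange

theorem eGRSCode_selfOrthogonal_iff_forall_degreeLT (n k : ℕ) (a v : Fin n → F) :
    (∀ b ∈ eGRSCode n k a v, ∀ c ∈ eGRSCode n k a v, ∑ i, b i * c i = 0) ↔
      ∀ f ∈ degreeLT F k, ∀ g ∈ degreeLT F k,
        ∑ i, v i ^ 2 * (f * g).eval (a i) + f.coeff (k - 1) * g.coeff (k - 1) = 0 := by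
  simp only [eGRSCode, Submodule.mem_map, forall_exists_index, and_imp,
    forall_apply_eq_imp_iff₂, Fin.sum_univ_castSucc]
  simp [eval_mul, mul_mul_mul_comm, sq]

theorem sum_sq_mul_pow_of_eGRSCode_selfOrthogonal {n k : ℕ} (hk : 1 ≤ k) {a v : Fin n → F}
    (h : ∀ b ∈ eGRSCode n k a v, ∀ c ∈ eGRSCode n k a v, ∑ i, b i * c i = 0)
    {t : ℕ} (ht : t ≤ 2 * k - 2) :
    ∑ i, v i ^ 2 * a i ^ t = if t = 2 * k - 2 then -1 else 0 := by
  obtain ⟨r, hr⟩ : ∃ r, r = min t (k - 1) := ⟨_, rfl⟩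
  have hXpow : ∀ {m}, m < k → (X ^ m : F[X]) ∈ degreeLT F k := fun hm =>
    mem_degreeLT.mpr ((degree_X_pow_le _).trans_lt (by exact_mod_cast hm))
  have h' := (eGRSCode_selfOrthogonal_iff_forall_degreeLT n k a v).mp h
    (X ^ r) (hXpow (by omega)) (X ^ (t - r)) (hXpow (by omega))
  rw [← pow_add, Nat.add_sub_cancel' (hr ▸ min_le_left _ _)] at h'
  simp only [eval_pow, eval_X, coeff_X_pow] at h'
  split_ifs at h' ⊢ <;> first | omega | linear_combination h'

theorem eGRSCode_selfOrthogonal_iff_general (F : Type*) [Field F]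
    {n k : ℕ} (hk1 : 1 ≤ k) (hk2 : k ≤ (n + 1) / 2)
    (a : Fin n → F) (ha : Function.Injective a)
    (v : Fin n → F) (hv : ∀ i, v i ≠ 0) :
    (∀ b ∈ eGRSCode n k a v, ∀ c ∈ eGRSCode n k a v, ∑ i, b i * c i = 0) ↔
      ∃ lam : Polynomial F, lam.degree = (n + 1 - 2 * k : ℕ) ∧ lam.leadingCoeff = -1 ∧
        ∀ i, v i ^ 2 = lam.eval (a i) * (∏ j ∈ Finset.univ.erase i, (a i - a j))⁻¹ ∧
          lam.eval (a i) ≠ 0 := by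
  have hinj : Set.InjOn a (univ : Finset (Fin n)) := ha.injOn
  set L : Fin n → F := fun i => ∏ j ∈ univ.erase i, (a i - a j)
  have hL : ∀ i, L i ≠ 0 := fun i =>
    prod_ne_zero_iff.mpr fun j hj => sub_ne_zero_of_ne (ha.ne (mem_erase.mp hj).1.symm)
  have hcard : #(univ : Finset (Fin n)) = n := card_fin n
  constructor
  · intro hso
    set lam := Lagrange.interpolate univ a (fun i => v i ^ 2 * L i)
    have heval : ∀ i, lam.eval (a i) = v i ^ 2 * L i := fun i =>
      Lagrange.eval_interpolate_at_node _ hinj (mem_univ i)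
    have hmoment : ∀ t, ∑ i, lam.eval (a i) * a i ^ t / L i = ∑ i, v i ^ 2 * a i ^ t :=
      fun t => sum_congr rfl fun i _ => by rw [heval]; field_simp [hL i]
    have hdeg : lam.natDegree ≤ n + 1 - 2 * k := by
      refine (natDegree_le_pred_of_degree_lt (Lagrange.degree_lt_of_sum_eval_mul_pow_div_eq_zero
        hinj (Lagrange.degree_interpolate_lt _ hinj) (d := 2 * k - 2) fun t ht => ?_)).trans
        (by omega)
      rw [hmoment, sum_sq_mul_pow_of_eGRSCode_selfOrthogonal hk1 hso ht.le, if_neg ht.ne]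
    have hcoeff : lam.coeff (n + 1 - 2 * k) = -1 := by
      have h := Lagrange.sum_eval_mul_eval_div_eq_coeff_mul_coeff hinj hdeg
        (natDegree_X_pow_le (2 * k - 2)) (by omega)
      simp only [eval_pow, eval_X, coeff_X_pow_self, mul_one] at h
      rw [← h, hmoment, sum_sq_mul_pow_of_eGRSCode_selfOrthogonal hk1 hso le_rfl, if_pos rfl]
    have hcoeff_ne : lam.coeff (n + 1 - 2 * k) ≠ 0 := by simp [hcoeff]
    refine ⟨lam, degree_eq_of_le_of_coeff_ne_zero (natDegree_le_iff_degree_le.mp hdeg) hcoeff_ne,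
      ?_, fun i => ⟨?_, ?_⟩⟩
    · rw [leadingCoeff, natDegree_eq_of_le_of_coeff_ne_zero hdeg hcoeff_ne, hcoeff]
    · rw [heval, mul_inv_cancel_right₀ (hL i)]
    · rw [heval]
      exact mul_ne_zero (pow_ne_zero 2 (hv i)) (hL i)
  · rintro ⟨lam, hdeg, hlc, hval⟩
    have hnatDeg := natDegree_eq_of_degree_eq_some hdeg
    rw [eGRSCode_selfOrthogonal_iff_forall_degreeLT]
    intro f hf g hg
    have hf' := natDegree_le_pred_of_degree_lt (mem_degreeLT.mp hf)
    have hg' := natDegree_le_pred_of_degree_lt (mem_degreeLT.mp hg)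
    have h := Lagrange.sum_eval_mul_eval_div_eq_coeff_mul_coeff hinj hnatDeg.le
      (natDegree_mul_le_of_le hf' hg') (by omega)
    rw [coeff_mul_add_eq_of_natDegree_le hf' hg', ← hnatDeg, ← leadingCoeff, hlc] at h
    have hweights : ∑ i, v i ^ 2 * (f * g).eval (a i) =
        ∑ i, lam.eval (a i) * (f * g).eval (a i) / L i :=
      sum_congr rfl fun i _ => by rw [(hval i).1, div_eq_mul_inv]; ring
    linear_combination hweights + h

/-- Lemma 3: criterion for Euclidean self-orthogonality of extended GRS codes.
Let `a 0, …, a (n-1)` be distinct elements of the finite field `F`, `v i` nonzero, and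
`1 ≤ k ≤ ⌊(n+1)/2⌋`.  Then `GRS_k(a, v, ∞)` is Euclidean self-orthogonal iff there exists a
polynomial `λ(x) = -x^{n-2k+1} + λ_{n-2k} x^{n-2k} + ⋯ + λ₀` (i.e. of degree `n - 2k + 1`
with leading coefficient `-1`) such that `v i ^ 2 = λ(a i) · L_a(a i)⁻¹ ≠ 0` for all `i`,
where `L_a(a i) = ∏_{j ≠ i} (a i - a j)`. -/
theorem eGRSCode_selfOrthogonal_iff (F : Type*) [Field F] [Fintype F]
    {n k : ℕ} (hk1 : 1 ≤ k) (hk2 : k ≤ (n + 1) / 2)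
    (a : Fin n → F) (ha : Function.Injective a)
    (v : Fin n → F) (hv : ∀ i, v i ≠ 0) :
    (∀ b ∈ eGRSCode n k a v, ∀ c ∈ eGRSCode n k a v, ∑ i, b i * c i = 0) ↔
      ∃ lam : Polynomial F, lam.degree = (n + 1 - 2 * k : ℕ) ∧ lam.leadingCoeff = -1 ∧
        ∀ i, v i ^ 2 = lam.eval (a i) * (∏ j ∈ Finset.univ.erase i, (a i - a j))⁻¹ ∧
          lam.eval (a i) ≠ 0 :=
  eGRSCode_selfOrthogonal_iff_general F hk1 hk2 a ha v hv
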